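/- arXiv:1711.05710 — 3 statements merged into one kernel-verified Lean document; each statement's English description precedes it below -/
import Mathlib

section
/- Let C be a binary self-dual [76,38,14] code with an automorphism σ of type 9-(8,0,4), with cycles Ω₁,…,Ω₈ of length 9 and fixed points Ω₉,…,Ω₁₂, and let π : F_σ(C) → 𝔽₂¹² be the map that reads one coordinate from each Ω_i (well defined since elements of F_σ(C) are constant on each cycle). Then C_π = π(F_σ(C)) is a binary self-dual code of length 12 (in particular, of dimension 6). -/
/-- The (Hamming) weight of a binary vector: the number of nonzero coordinates. -/
def wt {n : ℕ} (v : Fin n → ZMod 2) : ℕ := (Finset.univ.filter fun i => v i ≠ 0).card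

/-- A binary code `C` is self-dual if `C = C^⊥` w.r.t. the standard inner product. -/
def IsSelfDual {n : ℕ} (C : Submodule (ZMod 2) (Fin n → ZMod 2)) : Prop :=
  ∀ v : Fin n → ZMod 2, v ∈ C ↔ ∀ u ∈ C, ∑ i, u i * v i = 0

/-- `C` has minimum distance (= minimum weight) exactly `d`. -/
def HasMinDist {n : ℕ} (C : Submodule (ZMod 2) (Fin n → ZMod 2)) (d : ℕ) : Prop :=
  (∃ v ∈ C, v ≠ 0 ∧ wt v = d) ∧ ∀ v ∈ C, v ≠ 0 → d ≤ wt v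

/-- A coordinate permutation `σ` is an automorphism of the code `C`. -/
def IsAut {n : ℕ} (σ : Equiv.Perm (Fin n)) (C : Submodule (ZMod 2) (Fin n → ZMod 2)) : Prop :=
  ∀ v : Fin n → ZMod 2, v ∈ C ↔ (fun i => v (σ i)) ∈ C

/-- Two binary codes are permutation equivalent. -/
def PermEquiv {n : ℕ} (C C' : Submodule (ZMod 2) (Fin n → ZMod 2)) : Prop :=
  ∃ τ : Equiv.Perm (Fin n), ∀ v : Fin n → ZMod 2, v ∈ C ↔ (fun i => v (τ i)) ∈ C'

/-- The fixed subcode `F_σ(C) = {v ∈ C : vσ = v}` (as a set of codewords). -/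
def Fsig {n : ℕ} (σ : Equiv.Perm (Fin n)) (C : Submodule (ZMod 2) (Fin n → ZMod 2)) :
    Set (Fin n → ZMod 2) :=
  {v | v ∈ C ∧ (fun i => v (σ i)) = v}

/-- Self-duality for a length-12 binary code given as a set. -/
def IsSelfDualSet (S : Set (Fin 12 → ZMod 2)) : Prop :=
  ∀ v : Fin 12 → ZMod 2, v ∈ S ↔ ∀ u ∈ S, ∑ i, u i * v i = 0

/-! Every orbit of `σ` has length dividing the odd order of `σ`, so over `𝔽₂` the inner product of
two `σ`-fixed vectors equals that of their projections; hence `C_π` is self-orthogonal.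
Conversely, let `w` be orthogonal to `C_π` and let `v` be its lift, constant on the orbits. For
`u ∈ C` the trace `T u = u + uσ + ⋯ + uσ^(k-1)`, `k = ord σ`, lies in `F_σ(C)`, and since `k` is
odd, `⟨u, v⟩ = ⟨T u, v⟩ = ⟨π (T u), w⟩ = 0`. So `v ∈ C` by self-duality and `w = π v ∈ C_π`.
A self-dual code of length 12 has dimension 6. -/

open Finset

namespace Equiv.Perm

variable {ι : Type*} {σ : Perm ι}

theorem apply_pow_apply_of_comp_eq {α : Type*} {f : ι → α} (hf : f ∘ σ = f) (k : ℕ) (x : ι) :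
    f ((σ ^ k) x) = f x := by
  induction k with
  | zero => rfl
  | succ k ih => rw [pow_succ', mul_apply, ← ih]; exact congrFun hf _

theorem SameCycle.apply_eq_of_comp_eq [Finite ι] {α : Type*} {f : ι → α} (hf : f ∘ σ = f)
    {x y : ι} (h : σ.SameCycle x y) : f x = f y := by
  obtain ⟨k, rfl⟩ := h.exists_nat_pow_eq
  exact (apply_pow_apply_of_comp_eq hf k x).symm

theorem exists_orbitIndex {κ : Type*} {r : κ → ι} (hr₁ : ∀ x, ∃ i, σ.SameCycle (r i) x)
    (hr₂ : ∀ i j, σ.SameCycle (r i) (r j) → i = j) :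
    ∃ c : ι → κ, (∀ x, σ.SameCycle (r (c x)) x) ∧ c ∘ σ = c ∧ ∀ i, c (r i) = i := by
  choose c hc using hr₁
  refine ⟨c, hc, funext fun x => hr₂ _ _ ?_, fun i => hr₂ _ _ (hc (r i))⟩
  exact (hc (σ x)).trans (hc x).apply_right.symm

variable (σ) in
noncomputable def orbitSum {M : Type*} [AddCommMonoid M] (u : ι → M) : ι → M :=
  ∑ k ∈ range (orderOf σ), u ∘ ⇑(σ ^ k)

theorem orbitSum_comp {M : Type*} [AddCancelCommMonoid M] (u : ι → M) :
    orbitSum σ u ∘ σ = orbitSum σ u := by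
  have shift := (sum_range_succ' (fun k => u ∘ ⇑(σ ^ k)) (orderOf σ)).symm.trans
    (sum_range_succ (fun k => u ∘ ⇑(σ ^ k)) (orderOf σ))
  rw [pow_orderOf_eq_one, pow_zero, add_left_inj] at shift
  ext x
  simpa [orbitSum, pow_succ] using congrFun shift x

theorem sum_orbitSum_mul [Fintype ι] {R : Type*} [CommSemiring R] {u v : ι → R}
    (hv : v ∘ σ = v) :
    ∑ x, orbitSum σ u x * v x = orderOf σ • ∑ x, u x * v x := by
  simp only [orbitSum, Finset.sum_apply, Function.comp_apply, sum_mul]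
  rw [sum_comm]
  calc ∑ k ∈ range (orderOf σ), ∑ x, u ((σ ^ k) x) * v x
      = ∑ k ∈ range (orderOf σ), ∑ x, u ((σ ^ k) x) * v ((σ ^ k) x) := by
        simp only [apply_pow_apply_of_comp_eq hv]
    _ = ∑ _k ∈ range (orderOf σ), ∑ x, u x * v x :=
        sum_congr rfl fun k _ => Equiv.sum_comp (σ ^ k) fun x => u x * v x
    _ = orderOf σ • ∑ x, u x * v x := by rw [sum_const, card_range]

variable [Fintype ι] [DecidableEq ι]

theorem odd_card_sameCycle (hσ : Odd (orderOf σ)) (x : ι) : Odd #{y | σ.SameCycle x y} := by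
  by_cases hx : σ x = x
  · have : ({y | σ.SameCycle x y} : Finset ι) = {x} := by
      ext y
      simp only [mem_filter, mem_univ, true_and, mem_singleton]
      exact ⟨fun h => (h.eq_of_left hx).symm, fun h => h ▸ SameCycle.refl σ x⟩
    simp [this]
  · have : ({y | σ.SameCycle x y} : Finset ι) = (σ.cycleOf x).support := by
      ext y
      rw [mem_filter, mem_support_cycleOf_iff, mem_support]
      exact ⟨fun h => ⟨h.2, hx⟩, fun h => ⟨mem_univ y, h.1⟩⟩
    rw [this, ← (σ.isCycle_cycleOf hx).orderOf]
    exact hσ.of_dvd_nat (σ.orderOf_cycleOf_dvd_orderOf x)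

theorem sum_mul_eq_sum_mul_comp (hσ : Odd (orderOf σ)) {κ : Type*} [Fintype κ] [DecidableEq κ]
    {r : κ → ι} (hr₁ : ∀ x, ∃ i, σ.SameCycle (r i) x)
    (hr₂ : ∀ i j, σ.SameCycle (r i) (r j) → i = j) {a b : ι → ZMod 2} (ha : a ∘ σ = a)
    (hb : b ∘ σ = b) : ∑ x, a x * b x = ∑ i, a (r i) * b (r i) := by
  obtain ⟨c, hc, -, -⟩ := exists_orbitIndex hr₁ hr₂
  have fiber (i : κ) : univ.filter (fun x => c x = i) = univ.filter (σ.SameCycle (r i)) := by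
    ext x
    simp only [mem_filter, mem_univ, true_and]
    exact ⟨fun h => h ▸ hc x, fun h => hr₂ _ _ ((hc x).trans h.symm)⟩
  rw [← sum_fiberwise univ c]
  refine sum_congr rfl fun i _ => ?_
  have const : ∀ x ∈ univ.filter (σ.SameCycle (r i)), a x * b x = a (r i) * b (r i) := by
    intro x hx
    have h := (mem_filter.1 hx).2
    rw [h.apply_eq_of_comp_eq ha, h.apply_eq_of_comp_eq hb]
  rw [fiber, sum_congr rfl const, sum_const, nsmul_eq_mul,
    (odd_card_sameCycle hσ (r i)).natCast_zmod_two, one_mul]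

end Equiv.Perm

open Equiv.Perm

section Codes

variable {n : ℕ} {σ : Equiv.Perm (Fin n)}

theorem orbitSum_mem {C : Submodule (ZMod 2) (Fin n → ZMod 2)} (hσC : IsAut σ C)
    {u : Fin n → ZMod 2} (hu : u ∈ C) : orbitSum σ u ∈ C := by
  have comp_pow_mem (k : ℕ) : u ∘ ⇑(σ ^ k) ∈ C := by
    induction k with
    | zero => exact hu
    | succ k ih => rw [pow_succ]; exact (hσC _).1 ih
  exact C.sum_mem fun k _ => comp_pow_mem k

variable (σ) in
def fixedSubcode (C : Submodule (ZMod 2) (Fin n → ZMod 2)) : Submodule (ZMod 2) (Fin n → ZMod 2) :=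
  C ⊓ LinearMap.eqLocus (LinearMap.funLeft (ZMod 2) (ZMod 2) σ) LinearMap.id

variable (σ) in
def projFixedSubcode {m : ℕ} (C : Submodule (ZMod 2) (Fin n → ZMod 2)) (r : Fin m → Fin n) :
    Submodule (ZMod 2) (Fin m → ZMod 2) :=
  (fixedSubcode σ C).map (LinearMap.funLeft (ZMod 2) (ZMod 2) r)

theorem IsSelfDual.two_mul_finrank {C : Submodule (ZMod 2) (Fin n → ZMod 2)} (hC : IsSelfDual C) :
    2 * Module.finrank (ZMod 2) C = n := by
  let B := Matrix.toBilin' (1 : Matrix (Fin n) (Fin n) (ZMod 2))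
  have hB : B.Nondegenerate :=
    LinearMap.BilinForm.nondegenerate_toBilin'_of_det_ne_zero' _ (by simp)
  have hCB : B.orthogonal C = C := by
    ext v
    simp [B, LinearMap.BilinForm.mem_orthogonal_iff, Matrix.toBilin'_apply', dotProduct, hC v]
  have := LinearMap.BilinForm.finrank_orthogonal hB C
  rw [hCB, Module.finrank_fin_fun] at this
  have := Submodule.finrank_le C
  rw [Module.finrank_fin_fun] at this
  omega

theorem IsSelfDual.projFixedSubcode {m : ℕ} {C : Submodule (ZMod 2) (Fin n → ZMod 2)}
    (hC : IsSelfDual C) (hσC : IsAut σ C) (hσ : Odd (orderOf σ)) {r : Fin m → Fin n}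
    (hr₁ : ∀ x, ∃ i, σ.SameCycle (r i) x) (hr₂ : ∀ i j, σ.SameCycle (r i) (r j) → i = j) :
    IsSelfDual (projFixedSubcode σ C r) := by
  intro w
  constructor
  · rintro ⟨a, ⟨haC, ha⟩, rfl⟩ _ ⟨b, ⟨hbC, hb⟩, rfl⟩
    exact (sum_mul_eq_sum_mul_comp hσ hr₁ hr₂ hb ha).symm.trans ((hC a).1 haC b hbC)
  · intro hw
    obtain ⟨c, -, hcσ, hcr⟩ := exists_orbitIndex hr₁ hr₂
    have hv : (w ∘ c) ∘ σ = w ∘ c := by rw [Function.comp_assoc, hcσ]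
    refine ⟨w ∘ c, ⟨(hC _).2 fun u hu => ?_, hv⟩, ?_⟩
    · calc ∑ x, u x * (w ∘ c) x = ∑ x, orbitSum σ u x * (w ∘ c) x := by
            rw [sum_orbitSum_mul hv, nsmul_eq_mul, hσ.natCast_zmod_two, one_mul]
        _ = ∑ i, orbitSum σ u (r i) * w i := by
            rw [sum_mul_eq_sum_mul_comp hσ hr₁ hr₂ (orbitSum_comp u) hv]
            simp only [Function.comp_apply, hcr]
        _ = 0 := hw _ ⟨orbitSum σ u, ⟨orbitSum_mem hσC hu, orbitSum_comp u⟩, rfl⟩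
    · exact funext fun i => congrArg w (hcr i)

end Codes

theorem projection_selfdual_length_12_general
    (C : Submodule (ZMod 2) (Fin 76 → ZMod 2))
    (hsd : IsSelfDual C)
    (σ : Equiv.Perm (Fin 76)) (hσ : IsAut σ C)
    (htype : σ.cycleType = Multiset.replicate 8 9)
    (r : Fin 12 → Fin 76)
    (hr1 : ∀ x : Fin 76, ∃ i, σ.SameCycle (r i) x)
    (hr2 : ∀ i j, σ.SameCycle (r i) (r j) → i = j) :
    ∃ W : Submodule (ZMod 2) (Fin 12 → ZMod 2),
      (W : Set (Fin 12 → ZMod 2)) = (fun v => fun i : Fin 12 => v (r i)) '' Fsig σ C ∧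
      IsSelfDualSet ((fun v => fun i : Fin 12 => v (r i)) '' Fsig σ C) ∧
      Module.finrank (ZMod 2) W = 6 := by
  have hodd : Odd (orderOf σ) := by rw [← σ.lcm_cycleType, htype]; decide
  have hW := hsd.projFixedSubcode hσ hodd hr1 hr2
  refine ⟨projFixedSubcode σ C r, rfl, hW, ?_⟩
  have := hW.two_mul_finrank
  omega

/-- Let `C` be a binary self-dual `[76,38,14]` code with an automorphism `σ` of type
`9-(8,0,4)` and let `r` pick one coordinate from each of the 12 orbits (cycles and
fixed points) of `σ`.  Then `C_π = π(F_σ(C))`, where `π` reads the coordinates `r i`,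
is a binary self-dual code of length 12 (in particular of dimension 6). -/
theorem projection_selfdual_length_12
    (C : Submodule (ZMod 2) (Fin 76 → ZMod 2))
    (hsd : IsSelfDual C) (hdim : Module.finrank (ZMod 2) C = 38)
    (hd : HasMinDist C 14)
    (σ : Equiv.Perm (Fin 76)) (hσ : IsAut σ C)
    (htype : σ.cycleType = Multiset.replicate 8 9)
    (r : Fin 12 → Fin 76)
    (hr1 : ∀ x : Fin 76, ∃ i, σ.SameCycle (r i) x)
    (hr2 : ∀ i j, σ.SameCycle (r i) (r j) → i = j) :
    ∃ W : Submodule (ZMod 2) (Fin 12 → ZMod 2),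
      (W : Set (Fin 12 → ZMod 2)) = (fun v => fun i : Fin 12 => v (r i)) '' Fsig σ C ∧
      IsSelfDualSet ((fun v => fun i : Fin 12 => v (r i)) '' Fsig σ C) ∧
      Module.finrank (ZMod 2) W = 6 :=
  projection_selfdual_length_12_general C hsd σ hσ htype r hr1 hr2
end

section
/- Let C be a binary self-dual [76,38,14] code with an automorphism σ of type 9-(8,0,4), let F_σ(C) = {v ∈ C : vσ = v} and E_σ(C) = {v ∈ C : wt(v|Ω_i) ≡ 0 (mod 2) for every cycle and fixed point Ω_i of σ}. For 1 ≤ s ≤ 76 let A_s, B_s, E_s denote the numbers of codewords of weight s in C, F_σ(C), E_σ(C), respectively. Then E_s ≡ 0 (mod 3) and A_s ≡ B_s (mod 3) for all 1 ≤ s ≤ 76. -/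
/-- The subcode `E_σ(C)`: codewords whose restriction to every cycle (orbit) of `σ`,
including the fixed points, has even weight. -/
def Esig {n : ℕ} (σ : Equiv.Perm (Fin n)) (C : Submodule (ZMod 2) (Fin n → ZMod 2)) :
    Set (Fin n → ZMod 2) :=
  {v | v ∈ C ∧ ∀ i : Fin n, Even (Set.ncard {j : Fin n | σ.SameCycle i j ∧ v j ≠ 0})}

/-! σ has order 9, so all orbits of the induced action on vectors have size 1, 3 or 9, and a
σ-invariant set of vectors is congruent mod 3 to its set of σ-fixed vectors. The weight-`s`
vectors of `C` and of `E_σ(C)` are σ-invariant; the fixed ones of the first kind are exactly the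
weight-`s` vectors of `F_σ(C)`. A σ-fixed vector is constant on each cycle of σ, and all cycles
have odd length, so a σ-fixed vector of even weight on every cycle is zero: the second set has
no fixed vectors of positive weight. -/

open Equiv

theorem Equiv.Perm.ncard_modEq_ncard_fixed {α : Type*} [Finite α] {p k : ℕ} [Fact p.Prime]
    {f : Perm α} (hf : f ^ p ^ k = 1) {S : Set α} (hS : ∀ x, f x ∈ S ↔ x ∈ S) :
    S.ncard ≡ {x | x ∈ S ∧ f x = x}.ncard [MOD p] := by
  classical
  have := Fintype.ofFinite α
  set g : Perm S := f.subtypePerm hS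
  have hg : g ^ p ^ k = 1 := by ext; simp [g, subtypePerm_pow, hf]
  have hfix : {x | x ∈ S ∧ f x = x} = Subtype.val '' (↑g.supportᶜ : Set S) := by
    ext x
    simp only [Set.mem_ofPred_eq, Set.mem_image, Finset.coe_compl, Set.mem_compl_iff,
      Finset.mem_coe, Perm.mem_support, not_not, Subtype.ext_iff, g, Perm.subtypePerm_apply]
    exact ⟨fun ⟨hx, hfx⟩ => ⟨⟨x, hx⟩, hfx, rfl⟩,
      by rintro ⟨y, hy, rfl⟩; exact ⟨y.2, hy⟩⟩
  rw [hfix, Set.ncard_image_of_injective _ Subtype.val_injective, Set.ncard_coe_finset,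
    ← Nat.card_coe_set_eq, Nat.card_eq_fintype_card]
  exact (Perm.card_compl_support_modEq hg).symm

theorem Equiv.Perm.pow_eq_one_of_cycleType_eq_replicate {α : Type*} [Fintype α] [DecidableEq α]
    {σ : Perm α} {k m : ℕ} (h : σ.cycleType = Multiset.replicate k m) : σ ^ m = 1 := by
  refine orderOf_dvd_iff_pow_eq_one.mp ?_
  rw [← Perm.lcm_cycleType, h, Multiset.lcm_dvd]
  intro b hb
  rw [Multiset.eq_of_mem_replicate hb]

theorem Equiv.Perm.odd_ncard_sameCycle {α : Type*} [Finite α] {σ : Perm α}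
    (hσ : Odd (orderOf σ)) (i : α) : Odd {j | σ.SameCycle i j}.ncard := by
  classical
  have := Fintype.ofFinite α
  by_cases hi : σ i = i
  · have : {j | σ.SameCycle i j} = {i} :=
      Set.ext fun j => ⟨fun h => (h.eq_of_left hi).symm, fun h => h ▸ SameCycle.refl σ i⟩
    simp [this]
  · have hsupp : {j | σ.SameCycle i j} = ↑(σ.cycleOf i).support := by
      ext j
      rw [Finset.mem_coe, Perm.mem_support_cycleOf_iff, Perm.mem_support]
      exact (and_iff_left hi).symm
    rw [hsupp, Set.ncard_coe_finset, ← (Perm.isCycle_cycleOf σ hi).orderOf]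
    exact hσ.of_dvd_nat (Perm.orderOf_cycleOf_dvd_orderOf σ i)

section permuteCoords

variable {ι R : Type*}

def permuteCoords (σ : Perm ι) : Perm (ι → R) where
  toFun v i := v (σ i)
  invFun v i := v (σ⁻¹ i)
  left_inv v := funext fun i => by simp
  right_inv v := funext fun i => by simp

@[simp]
theorem permuteCoords_apply (σ : Perm ι) (v : ι → R) (i : ι) :
    permuteCoords σ v i = v (σ i) := rfl

theorem permuteCoords_pow_apply (σ : Perm ι) (m : ℕ) (v : ι → R) (i : ι) :
    (permuteCoords σ ^ m) v i = v ((σ ^ m) i) := by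
  induction m generalizing v with
  | zero => rfl
  | succ m ih => rw [pow_succ, Perm.mul_apply, ih, pow_succ', Perm.mul_apply, permuteCoords_apply]

theorem permuteCoords_pow_eq_one {σ : Perm ι} {m : ℕ} (h : σ ^ m = 1) :
    (permuteCoords σ : Perm (ι → R)) ^ m = 1 := by
  ext v i
  rw [permuteCoords_pow_apply, h, Perm.one_apply, Perm.one_apply]

theorem ncard_sameCycle_permuteCoords [Zero R] (σ : Perm ι) (v : ι → R) (i : ι) :
    {j | σ.SameCycle i j ∧ permuteCoords σ v j ≠ 0}.ncard
      = {j | σ.SameCycle i j ∧ v j ≠ 0}.ncard := by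
  have : {j | σ.SameCycle i j ∧ permuteCoords σ v j ≠ 0}
      = σ ⁻¹' {j | σ.SameCycle i j ∧ v j ≠ 0} := by
    ext j
    simp [Perm.sameCycle_apply_right]
  rw [this, ← Equiv.image_symm_eq_preimage, Set.ncard_image_of_injective _ (Equiv.injective _)]

theorem eq_zero_of_permuteCoords_eq_self [Finite ι] [Zero R] {σ : Perm ι}
    (hσ : Odd (orderOf σ)) {v : ι → R} (hv : permuteCoords σ v = v)
    (heven : ∀ i, Even {j | σ.SameCycle i j ∧ v j ≠ 0}.ncard) : v = 0 := by
  funext i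
  by_contra hi
  have hconst : ∀ j, σ.SameCycle i j → v j = v i := by
    intro j hj
    obtain ⟨m, -, rfl⟩ := hj.exists_pow_eq'
    rw [← permuteCoords_pow_apply σ m v i, Perm.pow_apply_eq_self_of_apply_eq_self hv]
  have : {j | σ.SameCycle i j ∧ v j ≠ 0} = {j | σ.SameCycle i j} :=
    Set.ext fun j => ⟨And.left, fun hj => ⟨hj, (hconst j hj).symm ▸ hi⟩⟩
  exact Nat.not_even_iff_odd.mpr (Perm.odd_ncard_sameCycle hσ i) (this ▸ heven i)

end permuteCoords

section Codes

variable {n : ℕ} {σ : Perm (Fin n)} {C : Submodule (ZMod 2) (Fin n → ZMod 2)}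

theorem wt_zero : wt (0 : Fin n → ZMod 2) = 0 := by
  simp [wt]

theorem wt_permuteCoords (σ : Perm (Fin n)) (v : Fin n → ZMod 2) :
    wt (permuteCoords σ v) = wt v := by
  unfold wt
  exact Finset.card_equiv σ fun i => by
    rw [Finset.mem_filter, Finset.mem_filter, permuteCoords_apply]
    simp only [Finset.mem_univ, true_and]

theorem IsAut.permuteCoords_mem_iff (hσ : IsAut σ C) (v : Fin n → ZMod 2) :
    permuteCoords σ v ∈ C ↔ v ∈ C :=
  (hσ v).symm

theorem IsAut.permuteCoords_mem_Esig_iff (hσ : IsAut σ C) (v : Fin n → ZMod 2) :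
    permuteCoords σ v ∈ Esig σ C ↔ v ∈ Esig σ C := by
  simp only [Esig, Set.mem_ofPred_eq, hσ.permuteCoords_mem_iff, ncard_sameCycle_permuteCoords]

theorem permuteCoords_mem_setOf_wt_eq_iff {T : Set (Fin n → ZMod 2)}
    (hT : ∀ v, permuteCoords σ v ∈ T ↔ v ∈ T) (s : ℕ) (v : Fin n → ZMod 2) :
    permuteCoords σ v ∈ {w | w ∈ T ∧ wt w = s} ↔ v ∈ {w | w ∈ T ∧ wt w = s} := by
  simp only [Set.mem_ofPred_eq, hT, wt_permuteCoords]

end Codes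

theorem weight_counts_mod_three_general
    (C : Submodule (ZMod 2) (Fin 76 → ZMod 2))
    (σ : Equiv.Perm (Fin 76)) (hσ : IsAut σ C)
    (htype : σ.cycleType = Multiset.replicate 8 9) :
    ∀ s : ℕ, 1 ≤ s → s ≤ 76 →
      3 ∣ Set.ncard {v : Fin 76 → ZMod 2 | v ∈ Esig σ C ∧ wt v = s} ∧
      Set.ncard {v : Fin 76 → ZMod 2 | v ∈ C ∧ wt v = s} ≡
        Set.ncard {v : Fin 76 → ZMod 2 | v ∈ Fsig σ C ∧ wt v = s} [MOD 3] := by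
  intro s hs _
  have hσ9 : σ ^ 3 ^ 2 = 1 := Perm.pow_eq_one_of_cycleType_eq_replicate htype
  have hodd : Odd (orderOf σ) := Odd.of_dvd_nat (by decide) (orderOf_dvd_of_pow_eq_one hσ9)
  have hP := permuteCoords_pow_eq_one (R := ZMod 2) hσ9
  constructor
  · have hE := Perm.ncard_modEq_ncard_fixed hP
      (permuteCoords_mem_setOf_wt_eq_iff hσ.permuteCoords_mem_Esig_iff s)
    have hfixed : {v | v ∈ {w | w ∈ Esig σ C ∧ wt w = s} ∧ permuteCoords σ v = v} = ∅ :=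
      Set.eq_empty_of_forall_notMem fun v ⟨⟨⟨_, heven⟩, hw⟩, hv⟩ => by
        rw [eq_zero_of_permuteCoords_eq_self hodd hv heven, wt_zero] at hw
        omega
    rwa [hfixed, Set.ncard_empty, Nat.modEq_zero_iff_dvd] at hE
  · have hF : {v | v ∈ {w | w ∈ C ∧ wt w = s} ∧ permuteCoords σ v = v}
        = {v | v ∈ Fsig σ C ∧ wt v = s} :=
      Set.ext fun _ => and_right_comm
    exact hF ▸ Perm.ncard_modEq_ncard_fixed hP
      (permuteCoords_mem_setOf_wt_eq_iff hσ.permuteCoords_mem_iff s)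

/-- Let `C` be a binary self-dual `[76,38,14]` code with an automorphism `σ` of type
`9-(8,0,4)`, and for `1 ≤ s ≤ 76` let `A_s`, `B_s`, `E_s` be the numbers of codewords
of weight `s` in `C`, `F_σ(C)`, `E_σ(C)` respectively.  Then `E_s ≡ 0 (mod 3)` and
`A_s ≡ B_s (mod 3)`. -/
theorem weight_counts_mod_three
    (C : Submodule (ZMod 2) (Fin 76 → ZMod 2))
    (hsd : IsSelfDual C) (hdim : Module.finrank (ZMod 2) C = 38)
    (hd : HasMinDist C 14)
    (σ : Equiv.Perm (Fin 76)) (hσ : IsAut σ C)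
    (htype : σ.cycleType = Multiset.replicate 8 9) :
    ∀ s : ℕ, 1 ≤ s → s ≤ 76 →
      3 ∣ Set.ncard {v : Fin 76 → ZMod 2 | v ∈ Esig σ C ∧ wt v = s} ∧
      Set.ncard {v : Fin 76 → ZMod 2 | v ∈ C ∧ wt v = s} ≡
        Set.ncard {v : Fin 76 → ZMod 2 | v ∈ Fsig σ C ∧ wt v = s} [MOD 3] :=
  weight_counts_mod_three_general C σ hσ htype
end

section
/- Let R = 𝔽₂[x]/(x⁹ − 1) and let 𝒯 ⊆ R be the set of classes of polynomials of degree < 9 with an even number of nonzero coefficients. Set e₁ = x⁸+x⁷+x⁵+x⁴+x²+x and e₂ = x⁶+x³. Then 𝒯 is an ideal of R and 𝒯 = I₁ ⊕ I₂ (an internal direct sum of ideals), where I₁ = {0, e₁, xe₁, x²e₁} is a field with 4 elements having multiplicative identity e₁, and I₂ = e₂R is a field with 64 elements having multiplicative identity e₂. -/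
open Polynomial in
/-- The ring `R = 𝔽₂[x]/(x⁹ − 1)`. -/
abbrev Rng : Type := Polynomial (ZMod 2) ⧸ Ideal.span {(X : Polynomial (ZMod 2)) ^ 9 - 1}

open Polynomial in
/-- The quotient map `𝔽₂[x] → R`. -/
noncomputable def pmk : Polynomial (ZMod 2) →+* Rng :=
  Ideal.Quotient.mk (Ideal.span {(X : Polynomial (ZMod 2)) ^ 9 - 1})

open Polynomial in
/-- `𝒯 ⊆ R`: classes of polynomials of degree `< 9` with an even number of nonzero
coefficients. -/
def Tset : Set Rng :=
  {r | ∃ p : Polynomial (ZMod 2), p.degree < 9 ∧ Even p.support.card ∧ pmk p = r}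

open Polynomial in
/-- `e₁ = x⁸+x⁷+x⁵+x⁴+x²+x`. -/
noncomputable def e1 : Rng := pmk (X ^ 8 + X ^ 7 + X ^ 5 + X ^ 4 + X ^ 2 + X)

open Polynomial in
/-- `e₂ = x⁶+x³`. -/
noncomputable def e2 : Rng := pmk (X ^ 6 + X ^ 3)

open Polynomial in
/-- The class of `x` in `R`. -/
noncomputable def xR : Rng := pmk X

/-- `I₁ = {0, e₁, xe₁, x²e₁}`. -/
noncomputable def I1set : Set Rng := {0, e1, xR * e1, xR ^ 2 * e1}

/-- `I₂ = e₂R`. -/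
def I2set : Set Rng := {r | ∃ s : Rng, r = e2 * s}

/-!
Over `𝔽₂`, `x⁹ − 1 = Φ₁ Φ₃ Φ₉` with `Φ₃ = x² + x + 1` and `Φ₉ = x⁶ + x³ + 1` irreducible,
since `2` has order `2` modulo `3` and order `6` modulo `9`. The reductions
`R → 𝔽₂[x]/(Φ₃) ≅ 𝔽₄` and `R → 𝔽₂[x]/(Φ₉) ≅ 𝔽₆₄` send `e₁`, resp. `e₂`, to `1`, while
`e₁Φ₃ = 0` and `e₂Φ₉ = 0` in `R`; so each reduction maps `eᵢR` bijectively onto the field,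
and `eᵢR` is a field with identity `eᵢ`. `𝒯` is the kernel of the augmentation `r ↦ r(1)`,
i.e. `𝒯 = (x − 1)R`, and `1 + e₁ + e₂ = 1 + x + ⋯ + x⁸` annihilates `x − 1`; hence
`t = te₁ + te₂` on `𝒯`, and `e₁e₂ = 0` makes this decomposition unique.
-/

open Polynomial

lemma two_eq_zero_of_algebra_zmod_two (S : Type*) [Ring S] [Algebra (ZMod 2) S] :
    (2 : S) = 0 := by
  rw [← map_ofNat (algebraMap (ZMod 2) S) 2]
  exact map_zero _

section IdempotentCorner

variable {R K : Type*} [CommRing R] [Field K] (f : R →+* K) {e : R}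

lemma isIdempotentElem_of_map_eq_one (hfe : f e = 1) (hker : ∀ r, f r = 0 → e * r = 0) :
    IsIdempotentElem e := by
  have h := hker (1 - e) (by rw [map_sub, map_one, hfe, sub_self])
  unfold IsIdempotentElem
  linear_combination -h

lemma IsIdempotentElem.mul_eq_self_of_mem_span (he : IsIdempotentElem e) {a : R}
    (ha : a ∈ Ideal.span {e}) : a * e = a := by
  obtain ⟨b, rfl⟩ := Ideal.mem_span_singleton'.mp ha
  rw [mul_assoc, he.eq]

lemma injOn_span_of_map_eq_one (hfe : f e = 1) (hker : ∀ r, f r = 0 → e * r = 0) :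
    Set.InjOn f (Ideal.span {e}) := by
  intro a ha b hb hab
  have he := isIdempotentElem_of_map_eq_one f hfe hker
  have hab' : e * (a - b) = 0 := hker _ (by rw [map_sub, hab, sub_self])
  calc a = a * e := (he.mul_eq_self_of_mem_span ha).symm
    _ = b * e := by linear_combination hab'
    _ = b := he.mul_eq_self_of_mem_span hb

lemma image_span_of_map_eq_one (hf : Function.Surjective f) (hfe : f e = 1) :
    f '' (Ideal.span {e}) = Set.univ := by
  refine Set.eq_univ_of_forall fun k => ?_
  obtain ⟨r, rfl⟩ := hf k
  exact ⟨r * e, Ideal.mul_mem_left _ r (Ideal.mem_span_singleton_self e), by simp [hfe]⟩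

lemma ncard_span_of_map_eq_one (hf : Function.Surjective f) (hfe : f e = 1)
    (hker : ∀ r, f r = 0 → e * r = 0) :
    (Ideal.span {e} : Set R).ncard = Nat.card K := by
  rw [← (injOn_span_of_map_eq_one f hfe hker).ncard_image, image_span_of_map_eq_one f hf hfe,
    Set.ncard_univ]

lemma exists_mul_eq_of_map_eq_one (hf : Function.Surjective f) (hfe : f e = 1)
    (hker : ∀ r, f r = 0 → e * r = 0) {a : R} (ha : a ∈ Ideal.span {e}) (ha0 : a ≠ 0) :
    ∃ b ∈ Ideal.span {e}, a * b = e := by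
  have hinj := injOn_span_of_map_eq_one f hfe hker
  have hfa : f a ≠ 0 := fun h =>
    ha0 (hinj ha (Ideal.zero_mem _) (by rw [h, map_zero]))
  obtain ⟨r, hr⟩ := hf (f a)⁻¹
  have hb : r * e ∈ Ideal.span {e} := Ideal.mul_mem_left _ r (Ideal.mem_span_singleton_self e)
  refine ⟨r * e, hb, hinj (Ideal.mul_mem_left _ a hb) (Ideal.mem_span_singleton_self e) ?_⟩
  rw [map_mul, map_mul, hr, hfe, mul_one, mul_inv_cancel₀ hfa]

end IdempotentCorner

lemma existsUnique_add_mem_span_of_mul_eq_zero {R : Type*} [CommRing R] {e e' : R}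
    (he : IsIdempotentElem e) (he' : IsIdempotentElem e') (hee' : e * e' = 0) {t : R}
    (ht : t = t * e + t * e') :
    ∃! p : R × R, p.1 ∈ Ideal.span {e} ∧ p.2 ∈ Ideal.span {e'} ∧ t = p.1 + p.2 := by
  refine ⟨(t * e, t * e'), ⟨Ideal.mul_mem_left _ t (Ideal.mem_span_singleton_self e),
    Ideal.mul_mem_left _ t (Ideal.mem_span_singleton_self e'), ht⟩, ?_⟩
  rintro ⟨a, b⟩ ⟨ha, hb, rfl⟩
  obtain ⟨c, rfl⟩ := Ideal.mem_span_singleton'.mp ha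
  obtain ⟨d, rfl⟩ := Ideal.mem_span_singleton'.mp hb
  ext
  · linear_combination (-c) * he.eq - d * hee'
  · linear_combination (-d) * he'.eq - c * hee'

lemma Ideal.Quotient.mul_eq_zero_of_factor_eq_zero {A : Type*} [CommRing A] {I : Ideal A}
    {g : A} (h : I ≤ Ideal.span {g}) {e : A ⧸ I} (he : e * Ideal.Quotient.mk I g = 0)
    {r : A ⧸ I} (hr : Ideal.Quotient.factor h r = 0) : e * r = 0 := by
  obtain ⟨p, rfl⟩ := Ideal.Quotient.mk_surjective r
  rw [Ideal.Quotient.factor_mk, Ideal.Quotient.eq_zero_iff_mem, Ideal.mem_span_singleton] at hr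
  obtain ⟨w, rfl⟩ := hr
  rw [map_mul, ← mul_assoc, he, zero_mul]

lemma Ideal.Quotient.exists_degree_lt_mk_eq {A : Type*} [CommRing A] [Nontrivial A] {q : A[X]}
    (hq : q.Monic) (r : A[X] ⧸ Ideal.span {q}) :
    ∃ p : A[X], p.degree < q.degree ∧ Ideal.Quotient.mk _ p = r := by
  obtain ⟨p, rfl⟩ := Ideal.Quotient.mk_surjective r
  refine ⟨p %ₘ q, degree_modByMonic_lt p hq, ?_⟩
  rw [Ideal.Quotient.mk_eq_mk_iff_sub_mem, Ideal.mem_span_singleton, modByMonic_eq_sub_mul_div]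
  exact ⟨-(p /ₘ q), by ring⟩

lemma eval_one_eq_card_support (p : (ZMod 2)[X]) : eval 1 p = p.support.card := by
  have hunit : ∀ a : ZMod 2, a ≠ 0 → a = 1 := by decide
  rw [eval_eq_sum, Polynomial.sum, Finset.card_eq_sum_ones, Nat.cast_sum]
  refine Finset.sum_congr rfl fun n hn => ?_
  rw [hunit _ (mem_support_iff.mp hn), one_pow, mul_one, Nat.cast_one]

lemma AdjoinRoot.natCard_eq_pow_natDegree {K : Type*} [Field K] {g : K[X]} (hg : g ≠ 0) :
    Nat.card (AdjoinRoot g) = Nat.card K ^ g.natDegree := by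
  have := (AdjoinRoot.powerBasis hg).finite
  rw [Module.natCard_eq_pow_finrank (K := K), (AdjoinRoot.powerBasis hg).finrank,
    AdjoinRoot.powerBasis_dim]

lemma irreducible_cyclotomic_of_orderOf_eq_totient {p n : ℕ} [Fact p.Prime] (hpn : p.Coprime n)
    (h : orderOf (ZMod.unitOfCoprime p hpn) = n.totient) : Irreducible (cyclotomic n (ZMod p)) :=
  ZMod.irreducible_of_dvd_cyclotomic_of_natDegree
    ((Nat.Prime.coprime_iff_not_dvd Fact.out).mp hpn) dvd_rfl
    (by rw [natDegree_cyclotomic, ← h])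

lemma cyclotomic_nine (R : Type*) [CommRing R] : cyclotomic 9 R = X ^ 6 + X ^ 3 + 1 := by
  rw [show 9 = 3 ^ (1 + 1) by rfl, cyclotomic_prime_pow_eq_geom_sum Nat.prime_three]
  simp only [Finset.sum_range_succ, Finset.sum_range_zero]
  ring

lemma cyclotomic_dvd_X_pow_sub_one_of_dvd (R : Type*) [CommRing R] {d n : ℕ} (h : d ∣ n) :
    cyclotomic d R ∣ X ^ n - 1 :=
  (cyclotomic.dvd_X_pow_sub_one d R).trans (dvd_pow_sub_one_of_dvd h)

instance fact_irreducible_cyclotomic_three : Fact (Irreducible (cyclotomic 3 (ZMod 2))) :=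
  ⟨irreducible_cyclotomic_of_orderOf_eq_totient (by norm_num)
    (by rw [orderOf_eq_iff] <;> decide)⟩

instance fact_irreducible_cyclotomic_nine : Fact (Irreducible (cyclotomic 9 (ZMod 2))) :=
  ⟨irreducible_cyclotomic_of_orderOf_eq_totient (by norm_num)
    (by rw [orderOf_eq_iff] <;> decide)⟩

lemma AdjoinRoot.root_cyclotomic_three_eq_zero (R : Type*) [CommRing R] :
    AdjoinRoot.root (cyclotomic 3 R) ^ 2 + AdjoinRoot.root (cyclotomic 3 R) + 1 = 0 := by
  have h := AdjoinRoot.eval₂_root (cyclotomic 3 R)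
  rw [congrArg (eval₂ _ _) (cyclotomic_three R)] at h
  simpa using h

lemma AdjoinRoot.root_cyclotomic_nine_eq_zero (R : Type*) [CommRing R] :
    AdjoinRoot.root (cyclotomic 9 R) ^ 6 + AdjoinRoot.root (cyclotomic 9 R) ^ 3 + 1 = 0 := by
  have h := AdjoinRoot.eval₂_root (cyclotomic 9 R)
  rw [congrArg (eval₂ _ _) (cyclotomic_nine R)] at h
  simpa using h

lemma natCard_adjoinRoot_cyclotomic_zmod_two (n : ℕ) :
    Nat.card (AdjoinRoot (cyclotomic n (ZMod 2))) = 2 ^ n.totient := by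
  rw [AdjoinRoot.natCard_eq_pow_natDegree (cyclotomic_ne_zero n _), natDegree_cyclotomic,
    Nat.card_zmod]

lemma AdjoinRoot.cyclotomic_three_zmod_two_cases (k : AdjoinRoot (cyclotomic 3 (ZMod 2))) :
    k = 0 ∨ k = 1 ∨ k = AdjoinRoot.root _ ∨ k = AdjoinRoot.root _ ^ 2 := by
  let pb := AdjoinRoot.powerBasis (cyclotomic_ne_zero 3 (ZMod 2))
  obtain ⟨p, hp, rfl⟩ := pb.exists_eq_aeval k
  have hdim : pb.dim = 2 := by
    rw [AdjoinRoot.powerBasis_dim, natDegree_cyclotomic]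
    decide
  obtain ⟨a, b, rfl⟩ := exists_eq_X_add_C_of_natDegree_le_one (by omega : p.natDegree ≤ 1)
  have hsq : AdjoinRoot.root (cyclotomic 3 (ZMod 2)) ^ 2 = AdjoinRoot.root _ + 1 := by
    linear_combination AdjoinRoot.root_cyclotomic_three_eq_zero (ZMod 2) -
      (AdjoinRoot.root _ + 1) * two_eq_zero_of_algebra_zmod_two (AdjoinRoot (cyclotomic 3 (ZMod 2)))
  have hcases : ∀ c : ZMod 2, c = 0 ∨ c = 1 := by decide
  rw [hsq]
  rcases hcases a with rfl | rfl <;> rcases hcases b with rfl | rfl <;> simp [pb, add_comm]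

lemma pmk_X : pmk X = xR := rfl

lemma xR_pow_nine : xR ^ 9 = 1 := by
  rw [xR, ← map_pow, ← map_one pmk, pmk, Ideal.Quotient.mk_eq_mk_iff_sub_mem]
  exact Ideal.mem_span_singleton_self _

lemma e1_eq : e1 = xR ^ 8 + xR ^ 7 + xR ^ 5 + xR ^ 4 + xR ^ 2 + xR := by
  simp [e1, xR]

lemma e2_eq : e2 = xR ^ 6 + xR ^ 3 := by
  simp [e2, xR]

lemma e1_mul_e2 : e1 * e2 = 0 := by
  rw [e1_eq, e2_eq]
  linear_combination (xR ^ 5 + xR ^ 4 + 2 * xR ^ 2 + 2 * xR) * xR_pow_nine +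
    (xR ^ 8 + xR ^ 7 + xR ^ 5 + xR ^ 4 + xR ^ 2 + xR) * two_eq_zero_of_algebra_zmod_two Rng

lemma e1_mul_pmk_cyclotomic_three : e1 * pmk (cyclotomic 3 (ZMod 2)) = 0 := by
  simp only [cyclotomic_three, map_add, map_pow, map_one, pmk_X, e1_eq]
  linear_combination (xR + 2) * xR_pow_nine +
    (xR ^ 8 + xR ^ 7 + xR ^ 6 + xR ^ 5 + xR ^ 4 + xR ^ 3 + xR ^ 2 + xR + 1) *
      two_eq_zero_of_algebra_zmod_two Rng

lemma e2_mul_pmk_cyclotomic_nine : e2 * pmk (cyclotomic 9 (ZMod 2)) = 0 := by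
  simp only [cyclotomic_nine, map_add, map_pow, map_one, pmk_X, e2_eq]
  linear_combination (xR ^ 3 + 2) * xR_pow_nine +
    (xR ^ 6 + xR ^ 3 + 1) * two_eq_zero_of_algebra_zmod_two Rng

noncomputable def projCyclotomic (n : ℕ) (hn : n ∣ 9) :
    Rng →+* AdjoinRoot (cyclotomic n (ZMod 2)) :=
  Ideal.Quotient.factor
    (Ideal.span_singleton_le_span_singleton.mpr (cyclotomic_dvd_X_pow_sub_one_of_dvd _ hn))

section projCyclotomic

variable {n : ℕ} {hn : n ∣ 9}

lemma projCyclotomic_surjective : Function.Surjective (projCyclotomic n hn) :=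
  Ideal.Quotient.factor_surjective _

lemma projCyclotomic_xR : projCyclotomic n hn xR = AdjoinRoot.root _ := rfl

lemma mul_eq_zero_of_projCyclotomic_eq_zero {e : Rng}
    (he : e * pmk (cyclotomic n (ZMod 2)) = 0) (r : Rng) (hr : projCyclotomic n hn r = 0) :
    e * r = 0 :=
  Ideal.Quotient.mul_eq_zero_of_factor_eq_zero _ he hr

end projCyclotomic

local notation "π₃" => projCyclotomic 3 (by norm_num)
local notation "π₉" => projCyclotomic 9 dvd_rfl

lemma projCyclotomic_three_e1 : π₃ e1 = 1 := by
  rw [e1_eq]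
  simp only [map_add, map_pow, projCyclotomic_xR]
  linear_combination (AdjoinRoot.root _ ^ 6 - AdjoinRoot.root _ ^ 4 + 2 * AdjoinRoot.root _ ^ 3 -
      2 * AdjoinRoot.root _ + 3) * AdjoinRoot.root_cyclotomic_three_eq_zero (ZMod 2) -
    2 * two_eq_zero_of_algebra_zmod_two (AdjoinRoot (cyclotomic 3 (ZMod 2)))

lemma projCyclotomic_nine_e2 : π₉ e2 = 1 := by
  rw [e2_eq]
  simp only [map_add, map_pow, projCyclotomic_xR]
  linear_combination AdjoinRoot.root_cyclotomic_nine_eq_zero (ZMod 2) -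
    two_eq_zero_of_algebra_zmod_two (AdjoinRoot (cyclotomic 9 (ZMod 2)))

lemma e1_mul_eq_zero_of_projCyclotomic_eq_zero (r : Rng) (hr : π₃ r = 0) : e1 * r = 0 :=
  mul_eq_zero_of_projCyclotomic_eq_zero e1_mul_pmk_cyclotomic_three r hr

lemma e2_mul_eq_zero_of_projCyclotomic_eq_zero (r : Rng) (hr : π₉ r = 0) : e2 * r = 0 :=
  mul_eq_zero_of_projCyclotomic_eq_zero e2_mul_pmk_cyclotomic_nine r hr

lemma isIdempotentElem_e1 : IsIdempotentElem e1 :=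
  isIdempotentElem_of_map_eq_one π₃ projCyclotomic_three_e1
    e1_mul_eq_zero_of_projCyclotomic_eq_zero

lemma isIdempotentElem_e2 : IsIdempotentElem e2 :=
  isIdempotentElem_of_map_eq_one π₉ projCyclotomic_nine_e2
    e2_mul_eq_zero_of_projCyclotomic_eq_zero

lemma ncard_span_e1 : (Ideal.span {e1} : Set Rng).ncard = 4 := by
  rw [ncard_span_of_map_eq_one π₃ projCyclotomic_surjective projCyclotomic_three_e1
    e1_mul_eq_zero_of_projCyclotomic_eq_zero, natCard_adjoinRoot_cyclotomic_zmod_two]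
  decide

lemma ncard_span_e2 : (Ideal.span {e2} : Set Rng).ncard = 64 := by
  rw [ncard_span_of_map_eq_one π₉ projCyclotomic_surjective projCyclotomic_nine_e2
    e2_mul_eq_zero_of_projCyclotomic_eq_zero, natCard_adjoinRoot_cyclotomic_zmod_two]
  decide

lemma I1set_eq_span : I1set = (Ideal.span {e1} : Set Rng) := by
  have hinj := injOn_span_of_map_eq_one π₃ projCyclotomic_three_e1
    e1_mul_eq_zero_of_projCyclotomic_eq_zero
  have hmem (c : Rng) : c * e1 ∈ Ideal.span {e1} :=
    Ideal.mul_mem_left _ c (Ideal.mem_span_singleton_self e1)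
  have hx : π₃ (xR * e1) = AdjoinRoot.root _ := by
    rw [map_mul, projCyclotomic_three_e1, mul_one, projCyclotomic_xR]
  have hx2 : π₃ (xR ^ 2 * e1) = AdjoinRoot.root _ ^ 2 := by
    rw [map_mul, projCyclotomic_three_e1, mul_one, map_pow, projCyclotomic_xR]
  refine subset_antisymm ?_ fun a ha => ?_
  · rintro a (rfl | rfl | rfl | rfl)
    · exact Ideal.zero_mem _
    · exact Ideal.mem_span_singleton_self e1
    · exact hmem xR
    · exact hmem (xR ^ 2)
  · rcases AdjoinRoot.cyclotomic_three_zmod_two_cases (π₃ a) with h | h | h | h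
    · exact Or.inl (hinj ha (Ideal.zero_mem _) (by rw [h, map_zero]))
    · exact Or.inr <| Or.inl <|
        hinj ha (Ideal.mem_span_singleton_self e1) (by rw [h, projCyclotomic_three_e1])
    · exact Or.inr <| Or.inr <| Or.inl <| hinj ha (hmem xR) (by rw [h, hx])
    · exact Or.inr <| Or.inr <| Or.inr <| hinj ha (hmem (xR ^ 2)) (by rw [h, hx2])

lemma I2set_eq_span : I2set = (Ideal.span {e2} : Set Rng) := by
  ext r
  rw [SetLike.mem_coe, Ideal.mem_span_singleton']
  exact ⟨fun ⟨s, hs⟩ => ⟨s, by rw [hs, mul_comm]⟩,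
    fun ⟨s, hs⟩ => ⟨s, by rw [← hs, mul_comm]⟩⟩

noncomputable def augmentation : Rng →+* ZMod 2 :=
  Ideal.Quotient.lift _ (evalRingHom 1) fun a ha => by
    obtain ⟨c, rfl⟩ := Ideal.mem_span_singleton.mp ha
    simp

lemma augmentation_pmk (p : (ZMod 2)[X]) : augmentation (pmk p) = eval 1 p := rfl

lemma Tset_eq_ker_augmentation : Tset = (RingHom.ker augmentation : Set Rng) := by
  ext r
  rw [SetLike.mem_coe, RingHom.mem_ker]
  constructor
  · rintro ⟨p, -, heven, rfl⟩
    rw [augmentation_pmk, eval_one_eq_card_support, ZMod.natCast_eq_zero_iff]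
    exact even_iff_two_dvd.mp heven
  · intro hr
    have hmonic : (X ^ 9 - 1 : (ZMod 2)[X]).Monic := by
      simpa using monic_X_pow_sub_C (1 : ZMod 2) (by norm_num : 9 ≠ 0)
    obtain ⟨p, hdeg, rfl⟩ := Ideal.Quotient.exists_degree_lt_mk_eq hmonic r
    rw [← C_1, degree_X_pow_sub_C (by norm_num)] at hdeg
    refine ⟨p, hdeg, ?_, rfl⟩
    rw [← pmk, augmentation_pmk, eval_one_eq_card_support, ZMod.natCast_eq_zero_iff] at hr
    exact even_iff_two_dvd.mpr hr

lemma augmentation_e1 : augmentation e1 = 0 := by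
  rw [e1, augmentation_pmk]
  simp only [eval_add, eval_pow, eval_X, one_pow]
  decide

lemma augmentation_e2 : augmentation e2 = 0 := by
  rw [e2, augmentation_pmk]
  simp only [eval_add, eval_pow, eval_X, one_pow]
  decide

lemma one_add_e1_add_e2_mul_xR_sub_one : (1 + e1 + e2) * (xR - 1) = 0 := by
  rw [e1_eq, e2_eq]
  linear_combination xR_pow_nine

lemma eq_mul_e1_add_mul_e2 {t : Rng} (ht : augmentation t = 0) : t = t * e1 + t * e2 := by
  obtain ⟨p, rfl⟩ := Ideal.Quotient.mk_surjective t
  rw [← pmk, augmentation_pmk] at ht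
  rw [← pmk]
  obtain ⟨q, rfl⟩ := dvd_iff_isRoot.mpr ht
  have hpmk : pmk ((X - C 1) * q) = (xR - 1) * pmk q := by simp [pmk_X]
  rw [hpmk]
  linear_combination pmk q * one_add_e1_add_e2_mul_xR_sub_one -
    (xR - 1) * pmk q * (e1 + e2) * two_eq_zero_of_algebra_zmod_two Rng

/-- `𝒯` is an ideal of `R = 𝔽₂[x]/(x⁹−1)` and `𝒯 = I₁ ⊕ I₂` is the internal direct sum
of the ideals `I₁ = {0, e₁, xe₁, x²e₁}`, a field with 4 elements with multiplicative
identity `e₁`, and `I₂ = e₂R`, a field with 64 elements with multiplicative identity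
`e₂`. -/
theorem T_eq_I1_oplus_I2 :
    -- 𝒯 is an ideal of R
    (∃ I : Ideal Rng, (I : Set Rng) = Tset) ∧
    -- I₁ is an ideal of R which is a field with 4 elements and identity e₁
    (∃ J : Ideal Rng, (J : Set Rng) = I1set) ∧
    Set.ncard I1set = 4 ∧ e1 ≠ 0 ∧
    (∀ a ∈ I1set, ∀ b ∈ I1set, a * b ∈ I1set) ∧
    (∀ a ∈ I1set, a * e1 = a) ∧
    (∀ a ∈ I1set, a ≠ 0 → ∃ b ∈ I1set, a * b = e1) ∧
    -- I₂ is an ideal of R which is a field with 64 elements and identity e₂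
    (∃ J : Ideal Rng, (J : Set Rng) = I2set) ∧
    Set.ncard I2set = 64 ∧ e2 ≠ 0 ∧
    (∀ a ∈ I2set, ∀ b ∈ I2set, a * b ∈ I2set) ∧
    (∀ a ∈ I2set, a * e2 = a) ∧
    (∀ a ∈ I2set, a ≠ 0 → ∃ b ∈ I2set, a * b = e2) ∧
    -- 𝒯 = I₁ ⊕ I₂ : internal direct sum
    (∀ a ∈ I1set, ∀ b ∈ I2set, a + b ∈ Tset) ∧
    (∀ t ∈ Tset, ∃! p : Rng × Rng, p.1 ∈ I1set ∧ p.2 ∈ I2set ∧ t = p.1 + p.2) := by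
  have hle₁ : Ideal.span {e1} ≤ RingHom.ker augmentation :=
    (Ideal.span_singleton_le_iff_mem _).mpr augmentation_e1
  have hle₂ : Ideal.span {e2} ≤ RingHom.ker augmentation :=
    (Ideal.span_singleton_le_iff_mem _).mpr augmentation_e2
  rw [Tset_eq_ker_augmentation, I1set_eq_span, I2set_eq_span]
  exact ⟨⟨_, rfl⟩,
    ⟨_, rfl⟩, ncard_span_e1, fun h => by simpa [h] using projCyclotomic_three_e1,
    fun a _ b hb => Ideal.mul_mem_left _ a hb,
    fun _ => isIdempotentElem_e1.mul_eq_self_of_mem_span,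
    fun _ => exists_mul_eq_of_map_eq_one π₃ projCyclotomic_surjective projCyclotomic_three_e1
      e1_mul_eq_zero_of_projCyclotomic_eq_zero,
    ⟨_, rfl⟩, ncard_span_e2, fun h => by simpa [h] using projCyclotomic_nine_e2,
    fun a _ b hb => Ideal.mul_mem_left _ a hb,
    fun _ => isIdempotentElem_e2.mul_eq_self_of_mem_span,
    fun _ => exists_mul_eq_of_map_eq_one π₉ projCyclotomic_surjective projCyclotomic_nine_e2
      e2_mul_eq_zero_of_projCyclotomic_eq_zero,
    fun a ha b hb => add_mem (hle₁ ha) (hle₂ hb),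
    fun t ht => existsUnique_add_mem_span_of_mul_eq_zero isIdempotentElem_e1
      isIdempotentElem_e2 e1_mul_e2 (eq_mul_e1_add_mul_e2 ht)⟩
end
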